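/- arXiv:2012.02892 — 4 statements merged into one kernel-verified Lean document; each statement's English description precedes it below -/
import Mathlib

section
/- Let 0 < g′ < g, and let v₁, …, vₙ and w₁, …, wₙ be vectors in ℤ^g all supported in the first g′ coordinates, such that the truncations ṽ₁, …, ṽₙ span ℝ^{g′}. Suppose A ∈ GL_g(ℤ), π is a permutation of {1, …, n}, and ε₁, …, εₙ ∈ {+1, −1} satisfy A vᵢ = εᵢ w_{π(i)} for all i. Then the upper-left g′×g′ block A′ of A lies in GL_{g′}(ℤ) (i.e. det A′ = ±1), and A′ ṽᵢ = εᵢ w̃_{π(i)} for all i. -/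
private lemma sum_truncate' {g g' : ℕ} (hle : g' ≤ g) {α : Type*} [AddCommMonoid α]
    (F : Fin g → α) (hF : ∀ k : Fin g, g' ≤ (k : ℕ) → F k = 0) :
    ∑ k : Fin g, F k = ∑ k : Fin g', F (Fin.castLE hle k) := by
  have h : ∑ k : Fin g', F (Fin.castLE hle k)
      = ∑ x ∈ Finset.univ.map (Fin.castLEEmb hle), F x := (Finset.sum_map Finset.univ (Fin.castLEEmb hle) F).symm
  rw [h]
  refine (Finset.sum_subset (Finset.subset_univ _) ?_).symm
  intro x _ hx
  refine hF x ?_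
  by_contra hlt
  push_neg at hlt
  exact hx (Finset.mem_map.2 ⟨⟨x, hlt⟩, Finset.mem_univ _, rfl⟩)

/-- If vectors `vᵢ, wᵢ ∈ ℤ^g` are supported in the first `g′` coordinates
(`0 < g′ < g`), the truncations of the `vᵢ` span `ℝ^{g′}`, and `A ∈ GL_g(ℤ)` satisfies
`A vᵢ = εᵢ w_{π(i)}` for a permutation `π` and signs `εᵢ = ±1`, then the upper-left
`g′ × g′` block `A′` of `A` lies in `GL_{g′}(ℤ)` and `A′ ṽᵢ = εᵢ w̃_{π(i)}`. -/
theorem corner_block_glZ_of_maps_supported_vectors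
    (g g' n : ℕ) (hg' : 0 < g') (hlt : g' < g)
    (v w : Fin n → Fin g → ℤ)
    (hv : ∀ i, ∀ j : Fin g, g' ≤ (j : ℕ) → v i j = 0)
    (hw : ∀ i, ∀ j : Fin g, g' ≤ (j : ℕ) → w i j = 0)
    (hspan : Submodule.span ℝ
      (Set.range fun i => fun j : Fin g' => ((v i (Fin.castLE hlt.le j) : ℝ))) = ⊤)
    (A : Matrix (Fin g) (Fin g) ℤ) (hA : IsUnit A.det)
    (π : Equiv.Perm (Fin n)) (ε : Fin n → ℤ) (hε : ∀ i, ε i = 1 ∨ ε i = -1)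
    (hmap : ∀ i, A.mulVec (v i) = ε i • w (π i)) :
    IsUnit (A.submatrix (Fin.castLE hlt.le) (Fin.castLE hlt.le)).det ∧
      ∀ i, (A.submatrix (Fin.castLE hlt.le) (Fin.castLE hlt.le)).mulVec
          (fun j => v i (Fin.castLE hlt.le j))
        = ε i • fun j => w (π i) (Fin.castLE hlt.le j) := by
  have hgm : g' + (g - g') = g := Nat.add_sub_cancel' hlt.le
  set m := g - g' with hm
  let e : Fin g' ⊕ Fin m ≃ Fin g := finSumFinEquiv.trans (finCongr hgm)
  have heinl : ∀ k : Fin g', e (Sum.inl k) = Fin.castLE hlt.le k := by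
    intro k; apply Fin.ext; simp [e]
  have heinr : ∀ k : Fin m, g' ≤ ((e (Sum.inr k)) : ℕ) := by
    intro k; simp [e]
  -- A mulVec (v i) vanishes at high rows
  have hhigh : ∀ i, ∀ j : Fin g, g' ≤ (j : ℕ) → A.mulVec (v i) j = 0 := by
    intro i j hj
    have := congrFun (hmap i) j
    rw [this]
    simp [hw (π i) j hj]
  -- mulVec as a truncated sum
  have hmv : ∀ i, ∀ j : Fin g,
      A.mulVec (v i) j = ∑ k : Fin g', A j (Fin.castLE hlt.le k) * v i (Fin.castLE hlt.le k) := by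
    intro i j
    have : A.mulVec (v i) j = ∑ k : Fin g, A j k * v i k := rfl
    rw [this]
    exact sum_truncate' hlt.le _ (fun k hk => by rw [hv i k hk, mul_zero])
  -- lower-left block vanishes
  have hC : ∀ j : Fin g, g' ≤ (j : ℕ) → ∀ k : Fin g', A j (Fin.castLE hlt.le k) = 0 := by
    intro j hj k
    let f : (Fin g' → ℝ) →ₗ[ℝ] ℝ :=
      { toFun := fun x => ∑ k : Fin g', (A j (Fin.castLE hlt.le k) : ℝ) * x k
        map_add' := by intro x y; simp [mul_add, Finset.sum_add_distrib]
        map_smul' := by intro c x; simp [Finset.mul_sum, mul_left_comm] }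
    have hf0 : ∀ i, f (fun k : Fin g' => ((v i (Fin.castLE hlt.le k) : ℝ))) = 0 := by
      intro i
      have h0 : A.mulVec (v i) j = 0 := hhigh i j hj
      rw [hmv i j] at h0
      have : ((∑ k : Fin g', A j (Fin.castLE hlt.le k) * v i (Fin.castLE hlt.le k) : ℤ) : ℝ) = 0 := by
        rw [h0]; norm_num
      push_cast at this
      simpa [f] using this
    have hfall : ∀ x : Fin g' → ℝ, f x = 0 := by
      intro x
      have hx : x ∈ Submodule.span ℝ
          (Set.range fun i => fun k : Fin g' => ((v i (Fin.castLE hlt.le k) : ℝ))) := by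
        rw [hspan]; trivial
      refine Submodule.span_induction ?_ ?_ ?_ ?_ hx
      · rintro y ⟨i, rfl⟩; exact hf0 i
      · simp
      · intro a b _ _ ha hb; rw [map_add, ha, hb, add_zero]
      · intro c a _ ha; rw [map_smul, ha, smul_zero]
    have := hfall (Pi.single k 1)
    simp [f, Pi.single_apply, mul_ite, Finset.sum_ite_eq'] at this
    exact_mod_cast this
  -- block decomposition
  have h21 : (A.submatrix e e).toBlocks₂₁ = 0 := by
    ext j k
    simp only [Matrix.toBlocks₂₁, Matrix.submatrix_apply, Matrix.of_apply, Matrix.zero_apply]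
    rw [heinl k]
    exact hC _ (heinr j) k
  have h11 : (A.submatrix e e).toBlocks₁₁ =
      A.submatrix (Fin.castLE hlt.le) (Fin.castLE hlt.le) := by
    ext i k
    simp [Matrix.toBlocks₁₁, heinl]
  have hdet : A.det =
      (A.submatrix (Fin.castLE hlt.le) (Fin.castLE hlt.le)).det *
        ((A.submatrix e e).toBlocks₂₂).det := by
    rw [← Matrix.det_submatrix_equiv_self e A]
    conv_lhs => rw [← Matrix.fromBlocks_toBlocks (A.submatrix ⇑e ⇑e), h21]
    rw [Matrix.det_fromBlocks_zero₂₁, h11]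
  constructor
  · rw [hdet] at hA
    exact isUnit_of_mul_isUnit_left hA
  · intro i
    funext j
    have key : A.mulVec (v i) (Fin.castLE hlt.le j) = ε i * w (π i) (Fin.castLE hlt.le j) := by
      rw [hmap i]; rfl
    have lhs : (A.submatrix (Fin.castLE hlt.le) (Fin.castLE hlt.le)).mulVec
        (fun k => v i (Fin.castLE hlt.le k)) j
        = A.mulVec (v i) (Fin.castLE hlt.le j) := by
      rw [hmv i]
      rfl
    rw [lhs, key]
    rfl
end

section
/- Let g′ < g and let v₁, …, vₙ and w₁, …, wₙ be vectors in ℤ^{g′} such that v₁, …, vₙ span ℝ^{g′}; write pad(x) ∈ ℤ^g for the vector obtained from x ∈ ℤ^{g′} by appending zeros. Then the following are equivalent: (1) there exist A ∈ GL_g(ℤ), a permutation π of {1, …, n}, and signs εᵢ ∈ {+1, −1} with A · pad(vᵢ) = εᵢ · pad(w_{π(i)}) for all i; (2) there exist A′ ∈ GL_{g′}(ℤ), a permutation π of {1, …, n}, and signs εᵢ ∈ {+1, −1} with A′ vᵢ = εᵢ w_{π(i)} for all i. -/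
/-- The vector in `ℤ^g` obtained from `x ∈ ℤ^{g′}` by appending zeros. -/
def padZeros (g' g : ℕ) (x : Fin g' → ℤ) : Fin g → ℤ :=
  fun j => if hj : (j : ℕ) < g' then x ⟨j, hj⟩ else 0

section Aux

variable {g g' : ℕ}

/-- The index equivalence splitting `Fin g` as `Fin g' ⊕ Fin (g - g')`. -/
def padEqv (hlt : g' < g) : Fin g' ⊕ Fin (g - g') ≃ Fin g :=
  finSumFinEquiv.trans (finCongr (by omega))

lemma padEqv_inl (hlt : g' < g) (k : Fin g') :
    ((padEqv hlt (Sum.inl k)) : ℕ) = k := by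
  simp [padEqv]

lemma padEqv_inr (hlt : g' < g) (k : Fin (g - g')) :
    ((padEqv hlt (Sum.inr k)) : ℕ) = g' + k := by
  simp [padEqv]

lemma padEqv_symm_lt (hlt : g' < g) (j : Fin g) (hj : (j : ℕ) < g') :
    (padEqv hlt).symm j = Sum.inl ⟨j, hj⟩ := by
  rw [Equiv.symm_apply_eq]
  exact (Fin.ext (padEqv_inl hlt ⟨j, hj⟩)).symm

lemma padEqv_symm_ge (hlt : g' < g) (j : Fin g) (hj : ¬ (j : ℕ) < g') :
    (padEqv hlt).symm j = Sum.inr ⟨(j : ℕ) - g', by omega⟩ := by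
  rw [Equiv.symm_apply_eq]
  refine (Fin.ext ?_).symm
  rw [padEqv_inr]
  show g' + ((j : ℕ) - g') = (j : ℕ)
  omega

lemma pad_comp (hlt : g' < g) (x : Fin g' → ℤ) :
    (padZeros g' g x) ∘ (padEqv hlt) = Sum.elim x 0 := by
  funext p
  cases p with
  | inl k =>
      have hk : ((padEqv hlt (Sum.inl k)) : ℕ) < g' := by
        rw [padEqv_inl]; exact k.isLt
      simp only [Function.comp_apply, padZeros, Sum.elim_inl, dif_pos hk]
      exact congrArg x (Fin.ext (padEqv_inl hlt k))
  | inr k =>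
      have hk : ¬ ((padEqv hlt (Sum.inr k)) : ℕ) < g' := by
        rw [padEqv_inr]; omega
      simp only [Function.comp_apply, padZeros, Sum.elim_inr, dif_neg hk, Pi.zero_apply]

/-- Real padding, as a linear map. -/
def padR (g' g : ℕ) : (Fin g' → ℝ) →ₗ[ℝ] (Fin g → ℝ) where
  toFun x := fun j => if hj : (j : ℕ) < g' then x ⟨j, hj⟩ else 0
  map_add' x y := by
    funext j
    by_cases hj : (j : ℕ) < g' <;> simp [hj]
  map_smul' c x := by
    funext j
    by_cases hj : (j : ℕ) < g' <;> simp [hj]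

lemma padR_intCast (x : Fin g' → ℤ) :
    padR g' g (fun k => ((x k : ℝ))) = fun j => ((padZeros g' g x j : ℝ)) := by
  funext j
  by_cases hj : (j : ℕ) < g' <;> simp [padR, padZeros, hj]

lemma padR_single (hlt : g' < g) (k : Fin g') :
    padR g' g (Pi.single k 1) = Pi.single (padEqv hlt (Sum.inl k)) 1 := by
  funext j
  by_cases hj : (j : ℕ) < g'
  · simp only [padR, LinearMap.coe_mk, AddHom.coe_mk, dif_pos hj]
    by_cases h : (⟨j, hj⟩ : Fin g') = k
    · rw [h, Pi.single_eq_same]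
      have : j = padEqv hlt (Sum.inl k) := by
        refine Fin.ext ?_
        rw [padEqv_inl]
        exact congrArg Fin.val h
      rw [this, Pi.single_eq_same]
    · rw [Pi.single_eq_of_ne h, Pi.single_eq_of_ne]
      intro hc
      apply h
      refine Fin.ext ?_
      have := congrArg Fin.val hc
      rwa [padEqv_inl] at this
  · simp only [padR, LinearMap.coe_mk, AddHom.coe_mk, dif_neg hj]
    rw [Pi.single_eq_of_ne]
    intro hc
    apply hj
    have := congrArg Fin.val hc
    rw [padEqv_inl] at this
    omega

lemma mulVec_intCast (A : Matrix (Fin g) (Fin g) ℤ) (y : Fin g → ℤ) :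
    (A.map (Int.cast : ℤ → ℝ)).mulVec (fun k => ((y k : ℝ)))
      = fun j => ((A.mulVec y j : ℝ)) := by
  funext j
  simp only [Matrix.mulVec, dotProduct, Matrix.map_apply]
  push_cast
  rfl

end Aux

/-- For `v₁,…,vₙ, w₁,…,wₙ ∈ ℤ^{g′}` with the `vᵢ` spanning `ℝ^{g′}` and
`g′ < g`, the zero-padded vectors are related by some `A ∈ GL_g(ℤ)` via a signed
permutation iff the original vectors are related by some `A′ ∈ GL_{g′}(ℤ)` via a signed
permutation. -/
theorem glZ_orbit_iff_reduced_glZ_orbit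
    (g g' n : ℕ) (hlt : g' < g) (v w : Fin n → Fin g' → ℤ)
    (hspan : Submodule.span ℝ (Set.range fun i => fun j => ((v i j : ℝ))) = ⊤) :
    (∃ (A : Matrix (Fin g) (Fin g) ℤ) (π : Equiv.Perm (Fin n)) (ε : Fin n → ℤ),
        IsUnit A.det ∧ (∀ i, ε i = 1 ∨ ε i = -1) ∧
        ∀ i, A.mulVec (padZeros g' g (v i)) = ε i • padZeros g' g (w (π i)))
      ↔ (∃ (A' : Matrix (Fin g') (Fin g') ℤ) (π : Equiv.Perm (Fin n)) (ε : Fin n → ℤ),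
        IsUnit A'.det ∧ (∀ i, ε i = 1 ∨ ε i = -1) ∧
        ∀ i, A'.mulVec (v i) = ε i • w (π i)) := by
  set e := padEqv hlt with he
  constructor
  · rintro ⟨A, π, ε, hA, hε, hmul⟩
    -- the ℝ-linear map x ↦ Aℝ ⬝ pad x
    set Aℝ := A.map (Int.cast : ℤ → ℝ) with hAℝ
    set L : (Fin g' → ℝ) →ₗ[ℝ] (Fin g → ℝ) := Aℝ.mulVecLin ∘ₗ padR g' g with hL
    -- high coordinates of L x vanish for all x
    have key : ∀ x : Fin g' → ℝ, ∀ j : Fin g, ¬ (j : ℕ) < g' → L x j = 0 := by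
      intro x
      have hx : x ∈ Submodule.span ℝ (Set.range fun i => fun j => ((v i j : ℝ))) := by
        rw [hspan]; trivial
      induction hx using Submodule.span_induction with
      | mem y hy =>
          obtain ⟨i, rfl⟩ := hy
          intro j hj
          have : L (fun k => ((v i k : ℝ))) = fun j => ((A.mulVec (padZeros g' g (v i)) j : ℝ)) := by
            rw [hL]
            simp only [LinearMap.coe_comp, Function.comp_apply, Matrix.mulVecLin_apply]
            rw [padR_intCast, mulVec_intCast]
          rw [this, hmul i]
          simp only [Pi.smul_apply, smul_eq_mul, padZeros, dif_neg hj, mul_zero, Int.cast_zero]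
      | zero => intro j _; simp
      | add y z _ _ hy hz => intro j hj; rw [map_add]; simp [hy j hj, hz j hj]
      | smul c y _ hy => intro j hj; rw [map_smul]; simp [hy j hj]
    -- hence the lower-left block of A vanishes
    have hblock : ∀ (j : Fin g), ¬ (j : ℕ) < g' → ∀ (k : Fin g'), A j (e (Sum.inl k)) = 0 := by
      intro j hj k
      have h1 : L (Pi.single k 1) j = Aℝ j (e (Sum.inl k)) := by
        rw [hL]
        simp only [LinearMap.coe_comp, Function.comp_apply, Matrix.mulVecLin_apply]
        rw [padR_single hlt k, Matrix.mulVec_single]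
        exact mul_one _
      have h2 := key (Pi.single k 1) j hj
      rw [h1] at h2
      have : ((A j (e (Sum.inl k)) : ℝ)) = 0 := h2
      exact_mod_cast this
    -- A' is the upper-left block
    refine ⟨Matrix.of fun j k => A (e (Sum.inl j)) (e (Sum.inl k)), π, ε, ?_, hε, ?_⟩
    · -- determinant
      have hsub : A.submatrix e e =
          Matrix.fromBlocks (Matrix.of fun j k => A (e (Sum.inl j)) (e (Sum.inl k)))
            (Matrix.of fun j k => A (e (Sum.inl j)) (e (Sum.inr k))) 0
            (Matrix.of fun j k => A (e (Sum.inr j)) (e (Sum.inr k))) := by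
        ext p q
        cases p with
        | inl p => cases q <;> rfl
        | inr p =>
            cases q with
            | inl q =>
                simp only [Matrix.submatrix_apply, Matrix.fromBlocks_apply₂₁, Matrix.zero_apply]
                refine hblock _ ?_ q
                rw [padEqv_inr]; omega
            | inr q => rfl
      have hdet : A.det = (Matrix.of fun j k => A (e (Sum.inl j)) (e (Sum.inl k))).det *
          (Matrix.of fun j k => A (e (Sum.inr j)) (e (Sum.inr k))).det := by
        rw [← Matrix.det_submatrix_equiv_self e A, hsub, Matrix.det_fromBlocks_zero₂₁]
      rw [hdet] at hA
      exact (isUnit_of_mul_isUnit_left hA)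
    · -- the mulVec identity
      intro i
      funext j
      have h1 : A.mulVec (padZeros g' g (v i)) (e (Sum.inl j))
          = (Matrix.of fun j k => A (e (Sum.inl j)) (e (Sum.inl k))).mulVec (v i) j := by
        simp only [Matrix.mulVec, dotProduct, Matrix.of_apply]
        rw [← Equiv.sum_comp e (fun q => A (e (Sum.inl j)) q * padZeros g' g (v i) q)]
        rw [Fintype.sum_sum_type]
        have hz : ∀ k : Fin (g - g'),
            A (e (Sum.inl j)) (e (Sum.inr k)) * padZeros g' g (v i) (e (Sum.inr k)) = 0 := by
          intro k
          have : padZeros g' g (v i) (e (Sum.inr k)) = 0 := by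
            have := congrFun (pad_comp hlt (v i)) (Sum.inr k)
            simpa using this
          rw [this, mul_zero]
        rw [Finset.sum_congr rfl (fun k _ => hz k), Finset.sum_const_zero, add_zero]
        refine Finset.sum_congr rfl fun k _ => ?_
        congr 1
        have := congrFun (pad_comp hlt (v i)) (Sum.inl k)
        simpa using this
      rw [← h1, hmul i]
      simp only [Pi.smul_apply, smul_eq_mul]
      congr 1
      have := congrFun (pad_comp hlt (w (π i))) (Sum.inl j)
      simpa using this
  · rintro ⟨A', π, ε, hA', hε, hmul⟩
    refine ⟨(Matrix.fromBlocks A' 0 0 (1 : Matrix (Fin (g - g')) (Fin (g - g')) ℤ)).submatrix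
        e.symm e.symm, π, ε, ?_, hε, ?_⟩
    · rw [Matrix.det_submatrix_equiv_self, Matrix.det_fromBlocks_zero₂₁, Matrix.det_one, mul_one]
      exact hA'
    · intro i
      rw [Matrix.submatrix_mulVec_equiv]
      simp only [Equiv.symm_symm]
      rw [pad_comp hlt (v i), Matrix.fromBlocks_mulVec]
      funext j
      by_cases hj : (j : ℕ) < g'
      · have hsymm : e.symm j = Sum.inl ⟨j, hj⟩ := padEqv_symm_lt hlt j hj
        simp only [Function.comp_apply, hsymm, Sum.elim_inl, Sum.elim_comp_inl,
          Matrix.zero_mulVec, add_zero, Pi.add_apply]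
        rw [hmul i]
        simp only [Pi.smul_apply, smul_eq_mul, Pi.zero_apply, add_zero]
        congr 1
        simp [padZeros, hj]
      · have hsymm : e.symm j = Sum.inr ⟨(j : ℕ) - g', by omega⟩ := padEqv_symm_ge hlt j hj
        simp only [Function.comp_apply, hsymm, Sum.elim_inr, Pi.add_apply,
          Matrix.zero_mulVec, Pi.zero_apply, zero_add]
        have : Sum.elim (v i) 0 ∘ Sum.inr = (0 : Fin (g - g') → ℤ) := rfl
        rw [this, Matrix.mulVec_zero]
        simp [padZeros, hj]
end

section
/- Let S = {v₁, …, vₙ} ⊆ ℤ^g be a finite set and suppose v₁ ≠ v₂ are both ℤ^g-coloops of S. Then there is a ℤ-basis v₁, v₂, w₃, …, w_g of ℤ^g such that every element of S ∖ {v₁, v₂} lies in the ℤ-linear span of w₃, …, w_g. -/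
/-!
The coordinate functional `φᵢ` of a basis witnessing that `vᵢ` is a coloop is `1` at `vᵢ` and
vanishes on the rest of `S`, so `φᵢ vⱼ = δᵢⱼ`. Such a biorthogonal system splits the module as
`span {v₁, v₂} ⊕ (ker φ₁ ⊓ ker φ₂)`, and over `ℤ` the second summand is free; `v₁, v₂` together
with any basis of it form the required basis, and its coordinates at `v₁, v₂` are `φ₁, φ₂`.
-/

/-- `v` is a `ℤ^g`-coloop of `S ⊆ ℤ^g`: there is a `ℤ`-basis of `ℤ^g` containing `v`
such that every other element of `S` lies in the `ℤ`-span of the remaining basis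
vectors. -/
def IsZColoop {g : ℕ} (S : Set (Fin g → ℤ)) (v : Fin g → ℤ) : Prop :=
  ∃ (b : Module.Basis (Fin g) ℤ (Fin g → ℤ)) (i₀ : Fin g), b i₀ = v ∧
    ∀ w ∈ S, w ≠ v → w ∈ Submodule.span ℤ (b '' {i | i ≠ i₀})

open Module Submodule

theorem Module.Basis.mem_span_image_setOf_iff {ι R M : Type*} [Semiring R] [AddCommMonoid M]
    [Module R M] (b : Basis ι R M) {p : ι → Prop} {m : M} :
    m ∈ span R (b '' {i | p i}) ↔ ∀ i, ¬p i → b.repr m i = 0 := by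
  simp only [b.mem_span_image, Set.subset_def, Finset.mem_coe, Finsupp.mem_support_iff,
    Set.mem_ofPred_eq]
  exact forall_congr' fun i => not_imp_comm

namespace Module

variable {R M ι : Type*} [CommRing R] [AddCommGroup M] [Module R M] [Fintype ι] [DecidableEq ι]
  {v : ι → M} {φ : ι → Dual R M}

theorem linearIndependent_of_biorthogonal (h : ∀ i j, φ i (v j) = if i = j then 1 else 0) :
    LinearIndependent R v := by
  refine Fintype.linearIndependent_iff.2 fun a ha i => ?_
  simpa [h] using congrArg (φ i) ha

theorem sub_sum_smul_mem_iInf_ker (h : ∀ i j, φ i (v j) = if i = j then 1 else 0) (x : M) :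
    x - ∑ j, φ j x • v j ∈ ⨅ i, LinearMap.ker (φ i) := by
  simp [mem_iInf, h]

theorem isCompl_span_range_iInf_ker (h : ∀ i j, φ i (v j) = if i = j then 1 else 0) :
    IsCompl (span R (Set.range v)) (⨅ i, LinearMap.ker (φ i)) := by
  constructor
  · rw [disjoint_def]
    intro x hx hker
    obtain ⟨a, rfl⟩ := (mem_span_range_iff_exists_fun R).1 hx
    have ha : ∀ i, a i = 0 := fun i => by
      simpa [h] using (mem_iInf _).1 hker i
    simp [ha]
  · refine codisjoint_iff_exists_add_eq.2 fun x =>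
      ⟨_, _, ?_, sub_sum_smul_mem_iInf_ker h x, add_sub_cancel _ _⟩
    exact sum_mem fun j _ => smul_mem _ _ (subset_span ⟨j, rfl⟩)

variable {κ : Type*}

noncomputable def basisOfBiorthogonal (h : ∀ i j, φ i (v j) = if i = j then 1 else 0)
    (bN : Basis κ R ↥(⨅ i, LinearMap.ker (φ i))) : Basis (ι ⊕ κ) R M :=
  ((Basis.span (linearIndependent_of_biorthogonal h)).prod bN).map
    (prodEquivOfIsCompl _ _ (isCompl_span_range_iInf_ker h))

variable (h : ∀ i j, φ i (v j) = if i = j then 1 else 0)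
  (bN : Basis κ R ↥(⨅ i, LinearMap.ker (φ i)))

@[simp]
theorem basisOfBiorthogonal_inl (i : ι) : basisOfBiorthogonal h bN (.inl i) = v i := by
  simp [basisOfBiorthogonal, Basis.span_apply]

@[simp]
theorem basisOfBiorthogonal_inr (k : κ) : basisOfBiorthogonal h bN (.inr k) = bN k := by
  simp [basisOfBiorthogonal]

@[simp]
theorem basisOfBiorthogonal_repr_inl (x : M) (i : ι) :
    (basisOfBiorthogonal h bN).repr x (.inl i) = φ i x := by
  rw [← Basis.coord_apply]
  congr 1
  refine (basisOfBiorthogonal h bN).ext fun k => ?_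
  rw [Basis.coord_apply, Basis.repr_self]
  rcases k with j | k
  · classical simp [h, Finsupp.single_apply, eq_comm]
  · simpa using ((mem_iInf _).1 (bN k).2 i).symm

end Module

theorem IsZColoop.exists_dual {g : ℕ} {S : Set (Fin g → ℤ)} {v : Fin g → ℤ}
    (hv : IsZColoop S v) : ∃ φ : Dual ℤ (Fin g → ℤ), φ v = 1 ∧ ∀ w ∈ S, w ≠ v → φ w = 0 := by
  obtain ⟨b, i₀, rfl, hspan⟩ := hv
  exact ⟨b.coord i₀, by simp, fun w hw hne =>
    b.mem_span_image_setOf_iff.1 (hspan w hw hne) i₀ (not_not.2 rfl)⟩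

theorem two_coloops_common_basis_general
    {g : ℕ} (S : Set (Fin g → ℤ))
    (v₁ v₂ : Fin g → ℤ) (h1 : v₁ ∈ S) (h2 : v₂ ∈ S) (hne : v₁ ≠ v₂)
    (hc1 : IsZColoop S v₁) (hc2 : IsZColoop S v₂) :
    ∃ (b : Module.Basis (Fin g) ℤ (Fin g → ℤ)) (i₁ i₂ : Fin g), i₁ ≠ i₂ ∧
      b i₁ = v₁ ∧ b i₂ = v₂ ∧
      ∀ w ∈ S, w ≠ v₁ → w ≠ v₂ →
        w ∈ Submodule.span ℤ (b '' {i | i ≠ i₁ ∧ i ≠ i₂}) := by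
  obtain ⟨φ₁, hφ₁v₁, hφ₁S⟩ := hc1.exists_dual
  obtain ⟨φ₂, hφ₂v₂, hφ₂S⟩ := hc2.exists_dual
  have hφ : ∀ i j, ![φ₁, φ₂] i (![v₁, v₂] j) = if i = j then 1 else 0 := by
    have hφ₁v₂ := hφ₁S v₂ h2 hne.symm
    have hφ₂v₁ := hφ₂S v₁ h1 hne
    intro i j
    fin_cases i <;> fin_cases j <;> simp [*]
  let B := basisOfBiorthogonal hφ (Free.chooseBasis ℤ _)
  let e := B.indexEquiv (Pi.basisFun ℤ (Fin g))
  refine ⟨B.reindex e, e (.inl 0), e (.inl 1), by simp, by simp [B], by simp [B],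
    fun w hw hw₁ hw₂ => (B.reindex e).mem_span_image_setOf_iff.2 fun i hi => ?_⟩
  obtain rfl | rfl : i = e (.inl 0) ∨ i = e (.inl 1) := by tauto
  · simpa [Basis.repr_reindex_apply, B] using hφ₁S w hw hw₁
  · simpa [Basis.repr_reindex_apply, B] using hφ₂S w hw hw₂

/-- If `v₁ ≠ v₂` are both `ℤ^g`-coloops of a finite set `S ⊆ ℤ^g`, then
there is a `ℤ`-basis of `ℤ^g` containing both `v₁` and `v₂` such that every element of
`S ∖ {v₁, v₂}` lies in the `ℤ`-span of the remaining basis vectors. -/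
theorem two_coloops_common_basis
    {g : ℕ} (S : Set (Fin g → ℤ)) (hS : S.Finite)
    (v₁ v₂ : Fin g → ℤ) (h1 : v₁ ∈ S) (h2 : v₂ ∈ S) (hne : v₁ ≠ v₂)
    (hc1 : IsZColoop S v₁) (hc2 : IsZColoop S v₂) :
    ∃ (b : Module.Basis (Fin g) ℤ (Fin g → ℤ)) (i₁ i₂ : Fin g), i₁ ≠ i₂ ∧
      b i₁ = v₁ ∧ b i₂ = v₂ ∧
      ∀ w ∈ S, w ≠ v₁ → w ≠ v₂ →
        w ∈ Submodule.span ℤ (b '' {i | i ≠ i₁ ∧ i ≠ i₂}) :=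
  two_coloops_common_basis_general S v₁ v₂ h1 h2 hne hc1 hc2
end

section
/- Let k ≥ 1 and let v₁, …, vₙ and w₁, …, wₙ be vectors in ℤ^{k+1} with last coordinate zero, such that the truncations ṽ₁, …, ṽₙ ∈ ℤ^k span ℝ^k. Suppose there exists A ∈ GL_{k+1}(ℤ) mapping the set {±v₁, …, ±vₙ} bijectively onto {±w₁, …, ±wₙ}. Then there exists Ã ∈ GL_{k+1}(ℤ) mapping the set {±v₁, …, ±vₙ, ±e_{k+1}} bijectively onto {±w₁, …, ±wₙ, ±e_{k+1}} with Ã e_{k+1} = e_{k+1}. (Inflation of perfect cones is well defined on GL-orbits.) -/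
/-!
Since the truncations of the `vᵢ` span `ℝ^k` and `A` maps each `vᵢ` to some `±wⱼ`, whose
last coordinate vanishes, the last row of `A` is zero off the diagonal. Replacing the last
column of `A` by `e_{k+1}` then changes neither its action on the `±vᵢ` nor, up to the unit
factor `A_{k+1,k+1}`, its determinant, and the new matrix fixes `e_{k+1}`.
-/

open Matrix

namespace Matrix

variable {n R : Type*} [Fintype n] [DecidableEq n]

theorem det_updateCol_single_self_eq_adjugate_apply [CommRing R] (A : Matrix n n R) (i : n) :
    (A.updateCol i (Pi.single i 1)).det = adjugate A i i := by
  rw [← det_transpose, ← updateRow_transpose, ← adjugate_apply, ← adjugate_transpose,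
    transpose_apply]

theorem det_eq_mul_adjugate_apply_of_row [CommRing R] {A : Matrix n n R} {i : n}
    (hA : ∀ j, j ≠ i → A i j = 0) : A.det = A i i * adjugate A i i := by
  rw [det_eq_sum_mul_adjugate_row A i, Finset.sum_eq_single i (fun j _ hj => by simp [hA j hj])
    (by simp)]

theorem isUnit_det_updateCol_single_self [CommRing R] {A : Matrix n n R} {i : n}
    (hA : ∀ j, j ≠ i → A i j = 0) (hdet : IsUnit A.det) :
    IsUnit (A.updateCol i (Pi.single i 1)).det := by
  rw [det_updateCol_single_self_eq_adjugate_apply]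
  rw [det_eq_mul_adjugate_apply_of_row hA] at hdet
  exact isUnit_of_mul_isUnit_right hdet

theorem updateCol_mulVec_of_apply_eq_zero [NonUnitalNonAssocSemiring R] (A : Matrix n n R)
    {i : n} (c : n → R) {x : n → R} (hx : x i = 0) : A.updateCol i c *ᵥ x = A *ᵥ x := by
  ext p
  refine Finset.sum_congr rfl fun j _ => ?_
  by_cases hj : j = i
  · simp [hj, hx]
  · simp [hj]

theorem updateCol_mulVec_single_self [NonAssocSemiring R] (A : Matrix n n R) (i : n)
    (c : n → R) : A.updateCol i c *ᵥ Pi.single i 1 = c := by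
  ext p
  simp

end Matrix

theorem eq_zero_of_dotProduct_eq_zero_of_span_eq_top {ι m : Type*} [Fintype m] [DecidableEq m]
    {u : ι → m → ℤ} (hu : Submodule.span ℝ (Set.range fun i j => (u i j : ℝ)) = ⊤)
    {c : m → ℤ} (hc : ∀ i, c ⬝ᵥ u i = 0) : c = 0 := by
  have hzero : dotProductBilin ℝ ℝ (fun j => (c j : ℝ)) = 0 :=
    LinearMap.ext_on_range hu fun i => by
      simpa [dotProduct] using congrArg (Int.cast (R := ℝ)) (hc i)
  ext j
  simpa using LinearMap.congr_fun hzero (Pi.single j 1)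

theorem mulVec_apply_last_of_apply_last_eq_zero {k : ℕ} {R : Type*} [NonUnitalNonAssocSemiring R]
    (A : Matrix (Fin (k + 1)) (Fin (k + 1)) R) {x : Fin (k + 1) → R}
    (hx : x (Fin.last k) = 0) :
    (A *ᵥ x) (Fin.last k) =
      (fun j : Fin k => A (Fin.last k) j.castSucc) ⬝ᵥ fun j => x j.castSucc := by
  simp [mulVec, dotProduct, Fin.sum_univ_castSucc, hx]

theorem apply_eq_zero_of_mem_signed {ι m α : Type*} [SubtractionMonoid α] {v : ι → m → α}
    {p : m} (hv : ∀ i, v i p = 0) {x : m → α} (hx : x ∈ {x | ∃ i, x = v i ∨ x = -v i}) :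
    x p = 0 := by
  obtain ⟨i, rfl | rfl⟩ := hx <;> simp [hv i]

theorem inflation_well_defined_general
    (k n : ℕ) (v w : Fin n → Fin (k + 1) → ℤ)
    (hv : ∀ i, v i (Fin.last k) = 0) (hw : ∀ i, w i (Fin.last k) = 0)
    (hspan : Submodule.span ℝ
      (Set.range fun i => fun j : Fin k => ((v i j.castSucc : ℝ))) = ⊤)
    (A : Matrix (Fin (k + 1)) (Fin (k + 1)) ℤ) (hA : IsUnit A.det)
    (himg : (fun x => A.mulVec x) '' {x | ∃ i, x = v i ∨ x = -v i}
      = {x | ∃ i, x = w i ∨ x = -w i}) :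
    ∃ B : Matrix (Fin (k + 1)) (Fin (k + 1)) ℤ, IsUnit B.det ∧
      (fun x => B.mulVec x) ''
          ({x | ∃ i, x = v i ∨ x = -v i} ∪
            {Pi.single (Fin.last k) 1, -Pi.single (Fin.last k) 1})
        = {x | ∃ i, x = w i ∨ x = -w i} ∪
            {Pi.single (Fin.last k) 1, -Pi.single (Fin.last k) 1} ∧
      B.mulVec (Pi.single (Fin.last k) 1) = Pi.single (Fin.last k) 1 := by
  have hAv : ∀ i, (A *ᵥ v i) (Fin.last k) = 0 := fun i =>
    apply_eq_zero_of_mem_signed hw (himg ▸ Set.mem_image_of_mem _ ⟨i, Or.inl rfl⟩)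
  have hrow : (fun j : Fin k => A (Fin.last k) j.castSucc) = 0 :=
    eq_zero_of_dotProduct_eq_zero_of_span_eq_top hspan fun i => by
      rw [← mulVec_apply_last_of_apply_last_eq_zero A (hv i), hAv i]
  have hrow' : ∀ j, j ≠ Fin.last k → A (Fin.last k) j = 0 := fun j hj => by
    obtain ⟨j, rfl⟩ := Fin.exists_castSucc_eq.mpr hj
    exact congrFun hrow j
  have hBe := A.updateCol_mulVec_single_self (Fin.last k) (Pi.single (Fin.last k) 1)
  refine ⟨A.updateCol (Fin.last k) (Pi.single (Fin.last k) 1),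
    isUnit_det_updateCol_single_self hrow' hA, ?_, hBe⟩
  rw [Set.image_union, Set.image_pair, ← himg, mulVec_neg, hBe]
  congr 1
  exact Set.image_congr fun x hx => updateCol_mulVec_of_apply_eq_zero _ _
    (apply_eq_zero_of_mem_signed hv hx)

/-- Let `v₁, …, vₙ, w₁, …, wₙ ∈ ℤ^{k+1}` have last coordinate zero, with
the truncations `ṽᵢ ∈ ℤ^k` spanning `ℝ^k`. If some `A ∈ GL_{k+1}(ℤ)` maps `{±vᵢ}`
bijectively onto `{±wᵢ}`, then some `Ã ∈ GL_{k+1}(ℤ)` maps `{±vᵢ} ∪ {±e_{k+1}}`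
bijectively onto `{±wᵢ} ∪ {±e_{k+1}}` with `Ã e_{k+1} = e_{k+1}`. -/
theorem inflation_well_defined
    (k n : ℕ) (hk : 1 ≤ k) (v w : Fin n → Fin (k + 1) → ℤ)
    (hv : ∀ i, v i (Fin.last k) = 0) (hw : ∀ i, w i (Fin.last k) = 0)
    (hspan : Submodule.span ℝ
      (Set.range fun i => fun j : Fin k => ((v i j.castSucc : ℝ))) = ⊤)
    (A : Matrix (Fin (k + 1)) (Fin (k + 1)) ℤ) (hA : IsUnit A.det)
    (himg : (fun x => A.mulVec x) '' {x | ∃ i, x = v i ∨ x = -v i}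
      = {x | ∃ i, x = w i ∨ x = -w i}) :
    ∃ B : Matrix (Fin (k + 1)) (Fin (k + 1)) ℤ, IsUnit B.det ∧
      (fun x => B.mulVec x) ''
          ({x | ∃ i, x = v i ∨ x = -v i} ∪
            {Pi.single (Fin.last k) 1, -Pi.single (Fin.last k) 1})
        = {x | ∃ i, x = w i ∨ x = -w i} ∪
            {Pi.single (Fin.last k) 1, -Pi.single (Fin.last k) 1} ∧
      B.mulVec (Pi.single (Fin.last k) 1) = Pi.single (Fin.last k) 1 :=
  inflation_well_defined_general k n v w hv hw hspan A hA himg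
end
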